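/- arXiv:2602.06814 — 2 statements merged into one kernel-verified Lean document; each statement's English description precedes it below -/
import Mathlib

section
/- Let X be a biquandle and A an abelian group. If φ : X → A is a 1-fare, then 2·φ(x) + 2·φ(x ▷̲ y) = 0 for all x, y ∈ X. In particular, if A has no 2-torsion, then φ(x ▷̲ y) = −φ(x) for all x, y. -/
/-- The biquandle axioms for a pair of binary operations `u` (x ▷̲ y) and `o` (x ▷̄ y). -/
def IsBiquandle {X : Type*} (u o : X → X → X) : Prop :=
  (∀ x, u x x = o x x) ∧
  (∀ y, Function.Bijective fun x => o x y) ∧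
  (∀ y, Function.Bijective fun x => u x y) ∧
  (Function.Bijective fun p : X × X => (o p.2 p.1, u p.1 p.2)) ∧
  (∀ x y z, u (u x y) (u z y) = u (u x z) (o y z)) ∧
  (∀ x y z, o (u x y) (u z y) = u (o x z) (o y z)) ∧
  (∀ x y z, o (o x y) (o z y) = o (o x z) (u y z))

/-- The 1-fare axioms for a function `φ : X → A`, with respect to biquandle
operations `u` (x ▷̲ y) and `o` (x ▷̄ y). -/
def IsFare1 {X A : Type*} [AddCommGroup A] (u o : X → X → X) (φ : X → A) : Prop :=
  (∀ x, φ (u x x) + φ x = 0) ∧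
  (∀ x y, φ x + φ y + φ (u x y) + φ (o y x) = 0) ∧
  (∀ x y z, φ y + φ (u x y) + φ (o x y) =
    φ (o z x) + φ (u x z) + φ (u (o y x) (o z x)))

/-- If `φ` is a 1-fare on a biquandle then `2φ(x) + 2φ(x ▷̲ y) = 0` for all
`x, y`; in particular if `A` has no 2-torsion then `φ(x ▷̲ y) = −φ(x)`. -/
theorem fare1_two_torsion {X A : Type*} [AddCommGroup A] (u o : X → X → X)
    (hB : IsBiquandle u o) (φ : X → A) (hφ : IsFare1 u o φ) :
    (∀ x y, (2 : ℤ) • φ x + (2 : ℤ) • φ (u x y) = 0) ∧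
      ((∀ a : A, a + a = 0 → a = 0) → ∀ x y, φ (u x y) = -φ x) := by
  obtain ⟨h1, h2, h3⟩ := hφ
  -- Step 1: φ (o x y) = -φ y, from axiom (iii) with z = y and axiom (i).
  have ho : ∀ x y, φ (o x y) = -φ y := by
    intro x y
    have h := h3 x y y
    have h' := h1 (o y x)
    linear_combination (norm := abel) h + h'
  -- Step 2: φ (u x y) = -φ y, from axiom (ii) and Step 1.
  have hu : ∀ x y, φ (u x y) = -φ y := by
    intro x y
    have h := h2 x y
    have h' := ho y x
    linear_combination (norm := abel) h - h'
  -- Step 3: φ is constant, from axiom (iii) with Steps 1, 2.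
  have hconst : ∀ y z : X, φ y = φ z := by
    intro y z
    have h := h3 y y z
    have e1 := hu y y
    have e2 := ho y y
    have e3 := ho z y
    have e4 := hu y z
    have e5 := hu (o y y) (o z y)
    rw [e1, e2, e4, e5, e3] at h
    linear_combination (norm := abel) -h
  -- Step 4: φ x + φ x = 0, combining constancy with Step 1.
  have htwo : ∀ x : X, φ x + φ x = 0 := by
    intro x
    have h := ho x x
    have h' := hconst (o x x) x
    linear_combination (norm := abel) h - h'
  constructor
  · intro x y
    rw [hu x y, hconst y x]
    have h := htwo x
    linear_combination (norm := abel) 2 • h - 2 • h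
  · intro hnt x y
    rw [hu x y, hconst y x]
end

section
/- Let X be a finite biquandle and A an abelian group with no torsion (e.g., A = ℤ). If φ : X → A is a 1-fare, then φ(x) + φ(x ▷̲ y) = 0 and φ(y) + φ(y ▷̄ x) = 0 for all x, y ∈ X; consequently φ takes the value −φ(x) on x ▷̲ y for every y, so φ ∘ Δ = −φ where Δ(x) = x ▷̲ x. -/
/-- On a finite biquandle, a 1-fare with torsion-free coefficients satisfies
`φ(x) + φ(x ▷̲ y) = 0` and `φ(y) + φ(y ▷̄ x) = 0` for all `x, y`; consequently
`φ ∘ Δ = −φ` where `Δ(x) = x ▷̲ x`. -/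
theorem fare1_torsionfree {X A : Type*} [Fintype X] [AddCommGroup A]
    (u o : X → X → X) (hB : IsBiquandle u o)
    (hA : ∀ n : ℕ, n ≠ 0 → ∀ a : A, n • a = 0 → a = 0)
    (φ : X → A) (hφ : IsFare1 u o φ) :
    (∀ x y, φ x + φ (u x y) = 0) ∧ (∀ x y, φ y + φ (o y x) = 0) ∧
      (fun x => φ (u x x)) = -φ := by
  obtain ⟨h1, h2, h3⟩ := hφ
  have h1' : ∀ x, φ (u x x) = -φ x := fun x => eq_neg_of_add_eq_zero_left (h1 x)
  -- Step 1: from (iii) with z = y we get φ (o x y) = -φ y.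
  have ho : ∀ x y, φ (o x y) = -φ y := by
    intro x y
    have e := h3 x y y
    rw [h1' (o y x)] at e
    have e2 : φ y + φ (o x y) + φ (u x y) = 0 + φ (u x y) := by
      rw [zero_add]
      calc φ y + φ (o x y) + φ (u x y) = φ y + φ (u x y) + φ (o x y) := by abel
        _ = φ (o y x) + φ (u x y) + -φ (o y x) := e
        _ = φ (u x y) := by abel
    exact eq_neg_of_add_eq_zero_right (add_right_cancel e2)
  -- Step 2: from (ii) we get φ (u x y) = -φ y.
  have hu : ∀ x y, φ (u x y) = -φ y := by
    intro x y
    have e := h2 x y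
    rw [ho y x] at e
    have e2 : φ y + φ (u x y) = 0 := by
      calc φ y + φ (u x y) = φ x + φ y + φ (u x y) + -φ x := by abel
        _ = 0 := e
    exact eq_neg_of_add_eq_zero_right e2
  -- Step 3: from the full (iii), φ is constant.
  have hconst : ∀ y z : X, φ y = φ z := by
    intro y z
    have e := h3 y y z
    rw [hu y y, ho y y, ho z y, hu y z, hu (o y y) (o z y), ho z y] at e
    -- e : φ y + -φ y + -φ y = -φ y + -φ z + - -φ y
    have : -φ y = -φ z := by
      calc -φ y = φ y + -φ y + -φ y := by abel
        _ = -φ y + -φ z + - -φ y := e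
        _ = -φ z := by abel
    exact neg_injective this
  -- Step 4: φ is identically zero.
  have hzero : ∀ x, φ x = 0 := by
    intro x
    refine hA 2 (by norm_num) _ ?_
    rw [two_nsmul]
    calc φ x + φ x = φ (u x x) + φ x := by rw [hconst x (u x x)]
      _ = 0 := h1 x
  refine ⟨fun x y => by rw [hzero, hzero, add_zero], fun x y => by rw [hzero, hzero, add_zero], ?_⟩
  funext x
  simp [hzero]
end
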